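/- Let q, h, a : ℝ → E³ together with a continuously differentiable conical curvature κ : ℝ → ℝ be a Frenet frame of a ruled surface, with κ(s) ≠ 0 for all s, and let W(s) = κ(s)·q(s) + a(s) be the Darboux vector. If there is a fixed vector u ∈ E³ with u ≠ 0 such that s ↦ ⟪W(s), u⟫ is constant (i.e., the surface is Darboux slant), then κ is a constant function. -/

import Mathlib

/-! Differentiating `⟪W, u⟫` gives `κ' ⟪q, u⟫ = 0`. If `κ' s₀ ≠ 0`, continuity of `κ'` makes
`⟪q, u⟫` vanish near `s₀`; by the Frenet equations so do `⟪h, u⟫ = ⟪q, u⟫'` and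
`κ ⟪a, u⟫ = ⟪h, u⟫' + ⟪q, u⟫`. As `κ s₀ ≠ 0`, `u` is then orthogonal to the whole frame at `s₀`,
so `u = 0`. Hence `κ' ≡ 0`. -/

open RealInnerProductSpace Matrix

noncomputable section

abbrev E3 := EuclideanSpace ℝ (Fin 3)

/-- A Frenet frame of a ruled surface: `q`, `h`, `a` are orthonormal at every
parameter and satisfy the Frenet equations with conical curvature `κ`. -/
def IsFrenetFrame (q h a : ℝ → E3) (κ : ℝ → ℝ) : Prop :=
  (∀ s, ⟪q s, q s⟫ = 1 ∧ ⟪h s, h s⟫ = 1 ∧ ⟪a s, a s⟫ = 1 ∧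
        ⟪q s, h s⟫ = 0 ∧ ⟪q s, a s⟫ = 0 ∧ ⟪h s, a s⟫ = 0) ∧
  (∀ s, HasDerivAt q (h s) s) ∧
  (∀ s, HasDerivAt h (-q s + κ s • a s) s) ∧
  (∀ s, HasDerivAt a (-(κ s • h s)) s)

/-- The Darboux vector of the frame. -/
def darboux (q a : ℝ → E3) (κ : ℝ → ℝ) : ℝ → E3 := fun s => κ s • q s + a s

open Filter Topology Module

theorem Orthonormal.eq_zero_of_forall_inner_eq_zero {𝕜 E ι : Type*} [RCLike 𝕜]
    [NormedAddCommGroup E] [InnerProductSpace 𝕜 E] [FiniteDimensional 𝕜 E] [Fintype ι]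
    {v : ι → E} (hv : Orthonormal 𝕜 v) (hcard : Fintype.card ι = finrank 𝕜 E) {x : E}
    (hx : ∀ i, inner 𝕜 (v i) x = 0) : x = 0 := by
  let b := basisOfLinearIndependentOfCardEqFinrank' v hv.linearIndependent hcard
  refine InnerProductSpace.ext_inner_left_basis b fun i => ?_
  simp [b, hx]

theorem Filter.EventuallyEq.eventuallyEq_zero_of_hasDerivAt {𝕜 F : Type*}
    [NontriviallyNormedField 𝕜] [NormedAddCommGroup F] [NormedSpace 𝕜 F] {f f' : 𝕜 → F} {x : 𝕜}
    (h : f =ᶠ[𝓝 x] 0) (hf : ∀ y, HasDerivAt f (f' y) y) : f' =ᶠ[𝓝 x] 0 :=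
  h.eventuallyEq_nhds.mono fun y hy => (hf y).unique ((hasDerivAt_const y 0).congr_of_eventuallyEq hy)

namespace IsFrenetFrame

variable {q h a : ℝ → E3} {κ : ℝ → ℝ}

theorem orthonormal (hF : IsFrenetFrame q h a κ) (s : ℝ) : Orthonormal ℝ ![q s, h s, a s] := by
  obtain ⟨hqq, hhh, haa, hqh, hqa, hha⟩ := hF.1 s
  have norm_eq_one {v : E3} (hv : ⟪v, v⟫ = 1) : ‖v‖ = 1 := by
    rw [norm_eq_sqrt_real_inner, hv, Real.sqrt_one]
  rw [orthonormal_iff_ite]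
  intro i j
  fin_cases i <;> fin_cases j <;> simp [norm_eq_one hqq, norm_eq_one hhh, norm_eq_one haa, hqh, hqa,
    hha, real_inner_comm (q s) (h s), real_inner_comm (q s) (a s), real_inner_comm (h s) (a s)]

theorem eq_zero_of_inner_eq_zero (hF : IsFrenetFrame q h a κ) {s : ℝ} {u : E3}
    (hq : ⟪q s, u⟫ = 0) (hh : ⟪h s, u⟫ = 0) (ha : ⟪a s, u⟫ = 0) : u = 0 :=
  (hF.orthonormal s).eq_zero_of_forall_inner_eq_zero (by simp) fun i => by
    fin_cases i <;> simpa

theorem hasDerivAt_inner_q (hF : IsFrenetFrame q h a κ) (u : E3) (s : ℝ) :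
    HasDerivAt (fun t => ⟪q t, u⟫) ⟪h s, u⟫ s := by
  simpa using (hF.2.1 s).inner ℝ (hasDerivAt_const s u)

theorem hasDerivAt_inner_h (hF : IsFrenetFrame q h a κ) (u : E3) (s : ℝ) :
    HasDerivAt (fun t => ⟪h t, u⟫) (-⟪q s, u⟫ + κ s * ⟪a s, u⟫) s := by
  simpa [inner_add_left, real_inner_smul_left] using (hF.2.2.1 s).inner ℝ (hasDerivAt_const s u)

theorem hasDerivAt_darboux (hF : IsFrenetFrame q h a κ) {κ' s : ℝ} (hκ : HasDerivAt κ κ' s) :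
    HasDerivAt (darboux q a κ) (κ' • q s) s :=
  ((hκ.smul (hF.2.1 s)).add (hF.2.2.2 s)).congr_deriv (by abel)

theorem eq_zero_of_inner_q_eventuallyEq_zero (hF : IsFrenetFrame q h a κ) {s : ℝ}
    (hκ : κ s ≠ 0) {u : E3} (hq : (fun t => ⟪q t, u⟫) =ᶠ[𝓝 s] 0) : u = 0 := by
  have hh := hq.eventuallyEq_zero_of_hasDerivAt (hF.hasDerivAt_inner_q u)
  have hqs : ⟪q s, u⟫ = 0 := hq.eq_of_nhds
  have has : ⟪a s, u⟫ = 0 := by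
    have hh' := (hh.eventuallyEq_zero_of_hasDerivAt (hF.hasDerivAt_inner_h u)).eq_of_nhds
    simpa [hqs, hκ] using hh'
  exact hF.eq_zero_of_inner_eq_zero hqs hh.eq_of_nhds has

end IsFrenetFrame

theorem darboux_slant_implies_const_curvature
    (q h a : ℝ → E3) (κ : ℝ → ℝ)
    (hframe : IsFrenetFrame q h a κ)
    (hκC1 : ContDiff ℝ 1 κ)
    (hκne : ∀ s, κ s ≠ 0)
    (u : E3) (hu : u ≠ 0) (C : ℝ)
    (hW : ∀ s, ⟪darboux q a κ s, u⟫ = C) :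
    ∃ κ₀ : ℝ, ∀ s, κ s = κ₀ := by
  have hκ : Differentiable ℝ κ := hκC1.differentiable one_ne_zero
  have hκ'q : ∀ s, deriv κ s * ⟪q s, u⟫ = 0 := fun s => by
    have hW' := ((hframe.hasDerivAt_darboux (hκ s).hasDerivAt).inner ℝ (hasDerivAt_const s u))
    simp only [hW, inner_zero_right, zero_add, real_inner_smul_left] at hW'
    exact hW'.unique (hasDerivAt_const s C)
  have hκ' : ∀ s, deriv κ s = 0 := fun s => by
    by_contra hs
    have hne : ∀ᶠ t in 𝓝 s, deriv κ t ≠ 0 :=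
      (hκC1.continuous_deriv le_rfl).continuousAt.eventually_ne hs
    exact hu <| hframe.eq_zero_of_inner_q_eventuallyEq_zero (hκne s) <|
      hne.mono fun t ht => (mul_eq_zero.mp (hκ'q t)).resolve_left ht
  exact ⟨κ 0, fun s => is_const_of_deriv_eq_zero hκ hκ' s 0⟩
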